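/- arXiv:1506.07969 — 3 statements merged into one kernel-verified Lean document; each statement's English description precedes it below -/
import Mathlib

section
/- For any real numbers t_1, ..., t_J with t = t_1 + ... + t_J, one has 1 - cos(t) ≤ J · Σ_{i=1}^J [1 - cos(t_i)]. -/
open Real Finset

lemma abs_sin_sum_le (J : ℕ) (a : Fin J → ℝ) :
    |Real.sin (∑ i, a i)| ≤ ∑ i, |Real.sin (a i)| := by
  induction J with
  | zero => simp
  | succ n ih =>
    rw [Fin.sum_univ_succ, Fin.sum_univ_succ, Real.sin_add]
    calc |Real.sin (a 0) * Real.cos (∑ i : Fin n, a i.succ) +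
            Real.cos (a 0) * Real.sin (∑ i : Fin n, a i.succ)|
        ≤ |Real.sin (a 0) * Real.cos (∑ i : Fin n, a i.succ)| +
            |Real.cos (a 0) * Real.sin (∑ i : Fin n, a i.succ)| := abs_add_le _ _
      _ ≤ |Real.sin (a 0)| + |Real.sin (∑ i : Fin n, a i.succ)| := by
          rw [abs_mul, abs_mul]
          gcongr
          · exact mul_le_of_le_one_right (abs_nonneg _) (Real.abs_cos_le_one _)
          · exact mul_le_of_le_one_left (abs_nonneg _) (Real.abs_cos_le_one _)
      _ ≤ |Real.sin (a 0)| + ∑ i : Fin n, |Real.sin (a i.succ)| := by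
          gcongr; exact ih _

/-- For real `t₁,…,t_J` with `t = t₁+⋯+t_J`, `1 - cos t ≤ J · ∑ᵢ (1 - cos tᵢ)`. -/
theorem cos_split_linear (J : ℕ) (t : Fin J → ℝ) :
    1 - Real.cos (∑ i, t i) ≤ (J : ℝ) * ∑ i, (1 - Real.cos (t i)) := by
  have key : ∀ x : ℝ, 1 - Real.cos x = 2 * Real.sin (x / 2) ^ 2 := by
    intro x
    have h := Real.cos_sq (x / 2)
    rw [mul_div_cancel₀ x two_ne_zero] at h
    nlinarith [Real.sin_sq_add_cos_sq (x / 2)]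
  rw [key]
  have h1 : (∑ i, t i) / 2 = ∑ i, t i / 2 := by rw [Finset.sum_div]
  rw [h1]
  have h2 : Real.sin (∑ i, t i / 2) ^ 2 ≤ (∑ i, |Real.sin (t i / 2)|) ^ 2 := by
    rw [← sq_abs]
    exact pow_le_pow_left₀ (abs_nonneg _) (abs_sin_sum_le J fun i => t i / 2) 2
  have h3 := sq_sum_le_card_mul_sum_sq (s := (Finset.univ : Finset (Fin J)))
    (f := fun i => |Real.sin (t i / 2)|)
  simp only [Finset.card_univ, Fintype.card_fin, sq_abs] at h3
  calc 2 * Real.sin (∑ i, t i / 2) ^ 2 ≤ 2 * ((J : ℝ) * ∑ i, Real.sin (t i / 2) ^ 2) := by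
        have := h2.trans h3
        linarith
    _ = (J : ℝ) * ∑ i, (1 - Real.cos (t i)) := by
        simp_rw [key, Finset.mul_sum]
        exact Finset.sum_congr rfl fun i _ => by ring
end

section
/- Let f, g : Z^d → R be absolutely summable totally rotationally symmetric functions with finite second moments. Then Σ_{s=1}^d |∂_s f̂(k) · ∂_s ĝ(k)| ≤ D̂^sin(k) · (Σ_x ‖x‖₂² |f(x)|) · (Σ_y ‖y‖₂² |g(y)|), where D̂^sin(k) = (1/d²) Σ_{s=1}^d sin²(k_s). -/
/-- `f : ℤ^d → ℝ` is totally rotationally symmetric when it is invariant under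
all coordinate permutations and sign flips. -/
def TotRotSymm (d : ℕ) (g : (Fin d → ℤ) → ℝ) : Prop :=
  ∀ (ν : Equiv.Perm (Fin d)) (δ : Fin d → ℤ), (∀ j, δ j = 1 ∨ δ j = -1) →
    ∀ x, g x = g fun j => δ j * x (ν j)

/-- The Fourier transform `f̂(k) = ∑ₓ f(x) e^{i k·x}` of `f : ℤ^d → ℝ`. -/
noncomputable def fourierHat (d : ℕ) (f : (Fin d → ℤ) → ℝ) (k : Fin d → ℝ) : ℂ :=
  ∑' x : Fin d → ℤ,
    (f x : ℂ) * Complex.exp (Complex.I * ((∑ s, k s * (x s : ℝ) : ℝ) : ℂ))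

lemma abs_le_one_add_sq' (a : ℝ) : |a| ≤ 1 + a ^ 2 := by
  nlinarith [sq_nonneg (|a| - 1), _root_.sq_abs a]

lemma abs_sin_nat_mul_le (n : ℕ) (t : ℝ) : |Real.sin (n * t)| ≤ n * |Real.sin t| := by
  induction n with
  | zero => simp
  | succ m ih =>
    have h0 : ((m : ℝ) + 1) * t = m * t + t := by ring
    push_cast
    rw [h0, Real.sin_add]
    calc |Real.sin (m*t) * Real.cos t + Real.cos (m*t) * Real.sin t|
        ≤ |Real.sin (m*t) * Real.cos t| + |Real.cos (m*t) * Real.sin t| := abs_add_le _ _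
      _ ≤ |Real.sin (m*t)| * 1 + 1 * |Real.sin t| := by
          rw [abs_mul, abs_mul]
          gcongr
          · exact Real.abs_cos_le_one _
          · exact Real.abs_cos_le_one _
      _ ≤ (m:ℝ) * |Real.sin t| + 1 * |Real.sin t| := by
          rw [mul_one]; gcongr
      _ = ((m:ℝ)+1) * |Real.sin t| := by ring

lemma abs_sin_int_mul_le (n : ℤ) (t : ℝ) : |Real.sin (n * t)| ≤ |(n:ℝ)| * |Real.sin t| := by
  rcases le_or_gt 0 n with h | h
  · lift n to ℕ using h
    simpa using abs_sin_nat_mul_le n t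
  · have := abs_sin_nat_mul_le (-n).toNat t
    have h1 : (((-n).toNat : ℝ)) = -(n:ℝ) := by
      have h2 : ((-n).toNat : ℤ) = -n := Int.toNat_of_nonneg (by omega)
      exact_mod_cast congrArg (Int.cast : ℤ → ℝ) h2
    rw [h1] at this
    have hneg : (n:ℝ) < 0 := by exact_mod_cast h
    calc |Real.sin (n*t)| = |Real.sin (-(n:ℝ)*t)| := by rw [neg_mul, Real.sin_neg, abs_neg]
      _ ≤ -(n:ℝ) * |Real.sin t| := this
      _ = |(n:ℝ)| * |Real.sin t| := by rw [abs_of_neg hneg]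

lemma summable_absmul (d : ℕ) (f : (Fin d → ℤ) → ℝ) (s : Fin d)
    (hf2 : Summable fun x : Fin d → ℤ => |f x| * ∑ t, ((x t : ℝ)) ^ 2) :
    Summable fun x : Fin d → ℤ => |f x| * ((x s : ℝ)) ^ 2 := by
  refine Summable.of_nonneg_of_le (fun x => by positivity) (fun x => ?_) hf2
  gcongr
  exact Finset.single_le_sum (f := fun t => ((x t : ℝ)) ^ 2)
    (fun t _ => sq_nonneg _) (Finset.mem_univ s)

lemma hasDerivAt_fourierHat (d : ℕ) (f : (Fin d → ℤ) → ℝ)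
    (hf : Summable fun x => |f x|)
    (hf2 : Summable fun x : Fin d → ℤ => |f x| * ∑ t, ((x t : ℝ)) ^ 2)
    (k : Fin d → ℝ) (s : Fin d) :
    HasDerivAt (fun u => fourierHat d f (Function.update k s u))
      (∑' x : Fin d → ℤ, (f x : ℂ) * (Complex.I * (x s : ℂ)) *
        Complex.exp (Complex.I * ((∑ t, k t * (x t : ℝ) : ℝ) : ℂ))) (k s) := by
  classical
  set c : (Fin d → ℤ) → ℝ := fun x => ∑ t ∈ Finset.univ.erase s, k t * (x t : ℝ) with hc
  set G : (Fin d → ℤ) → ℝ → ℂ := fun x u =>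
    (f x : ℂ) * Complex.exp (Complex.I * ((u : ℂ) * (x s : ℂ) + ((c x : ℝ) : ℂ))) with hG
  set G' : (Fin d → ℤ) → ℝ → ℂ := fun x u =>
    (f x : ℂ) * (Complex.I * (x s : ℂ)) *
      Complex.exp (Complex.I * ((u : ℂ) * (x s : ℂ) + ((c x : ℝ) : ℂ))) with hG'
  have hθ : ∀ x : Fin d → ℤ, (∑ t, k t * (x t : ℝ)) = k s * (x s : ℝ) + c x := by
    intro x
    rw [← Finset.add_sum_erase _ _ (Finset.mem_univ s)]
  have hsum_split : ∀ (u : ℝ) (x : Fin d → ℤ),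
      (∑ t, Function.update k s u t * (x t : ℝ)) = u * (x s : ℝ) + c x := by
    intro u x
    rw [← Finset.add_sum_erase _ _ (Finset.mem_univ s)]
    congr 1
    · simp
    · exact Finset.sum_congr rfl fun t ht => by
        rw [Function.update_of_ne (Finset.mem_erase.mp ht).1]
  have hfun : (fun u => fourierHat d f (Function.update k s u)) = fun u => ∑' x, G x u := by
    funext u
    unfold fourierHat
    refine tsum_congr fun x => ?_
    rw [hsum_split u x]
    simp only [hG]
    push_cast
    ring_nf
  have hGderiv : ∀ (x : Fin d → ℤ) (u : ℝ), HasDerivAt (G x) (G' x u) u := by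
    intro x u
    have hinner : HasDerivAt (fun z : ℂ => Complex.I * (z * (x s : ℂ) + ((c x : ℝ) : ℂ)))
        (Complex.I * (x s : ℂ)) (u : ℂ) := by
      simpa using (((hasDerivAt_id (u : ℂ)).mul_const ((x s : ℂ))).add_const
        ((c x : ℝ) : ℂ)).const_mul Complex.I
    have h1 := (hinner.cexp.const_mul ((f x : ℂ))).comp_ofReal
    convert h1 using 1
    rw [hG']
    ring
  have hbound : ∀ (x : Fin d → ℤ) (u : ℝ), ‖G' x u‖ ≤ |f x| + |f x| * ∑ t, ((x t : ℝ)) ^ 2 := by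
    intro x u
    have habs : ‖(Complex.exp (Complex.I *
        ((u : ℂ) * (x s : ℂ) + ((c x : ℝ) : ℂ))))‖ = 1 := by
      rw [show (Complex.I * ((u : ℂ) * (x s : ℂ) + ((c x : ℝ) : ℂ)))
          = ((u * (x s : ℝ) + c x : ℝ) : ℂ) * Complex.I by push_cast; ring]
      exact Complex.norm_exp_ofReal_mul_I _
    have hnorm : ‖G' x u‖ = |f x| * |(x s : ℝ)| := by
      simp only [hG', norm_mul, Complex.norm_real, Real.norm_eq_abs,
        Complex.norm_I, habs, Complex.norm_intCast]
      push_cast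
      ring
    rw [hnorm]
    calc |f x| * |(x s : ℝ)| ≤ |f x| * (1 + ((x s : ℝ)) ^ 2) := by
          gcongr; exact abs_le_one_add_sq' _
      _ ≤ |f x| * (1 + ∑ t, ((x t : ℝ)) ^ 2) := by
          gcongr
          exact Finset.single_le_sum (f := fun t => ((x t : ℝ)) ^ 2)
            (fun t _ => sq_nonneg _) (Finset.mem_univ s)
      _ = |f x| + |f x| * ∑ t, ((x t : ℝ)) ^ 2 := by ring
  have hg0 : Summable fun x => G x (k s) := by
    refine Summable.of_norm ?_
    refine hf.congr fun x => ?_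
    have habs : ‖(Complex.exp (Complex.I *
        (((k s : ℝ) : ℂ) * (x s : ℂ) + ((c x : ℝ) : ℂ))))‖ = 1 := by
      rw [show (Complex.I * (((k s : ℝ) : ℂ) * (x s : ℂ) + ((c x : ℝ) : ℂ)))
          = ((k s * (x s : ℝ) + c x : ℝ) : ℂ) * Complex.I by push_cast; ring]
      exact Complex.norm_exp_ofReal_mul_I _
    simp [hG, norm_mul, habs, Complex.norm_real]
  have key := hasDerivAt_tsum (hf.add hf2) hGderiv hbound hg0 (k s)
  rw [hfun]
  refine key.congr_deriv ?_
  symm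
  refine tsum_congr fun x => ?_
  rw [hG']
  congr 2
  rw [hθ x]
  push_cast
  ring

lemma deriv_term_bound (d : ℕ) (f : (Fin d → ℤ) → ℝ)
    (hf : Summable fun x => |f x|) (hfs : TotRotSymm d f)
    (hf2 : Summable fun x : Fin d → ℤ => |f x| * ∑ t, ((x t : ℝ)) ^ 2)
    (k : Fin d → ℝ) (s : Fin d) :
    ‖(∑' x : Fin d → ℤ, (f x : ℂ) * (Complex.I * (x s : ℂ)) *
        Complex.exp (Complex.I * ((∑ t, k t * (x t : ℝ) : ℝ) : ℂ)))‖
      ≤ |Real.sin (k s)| * ∑' x : Fin d → ℤ, |f x| * ((x s : ℝ)) ^ 2 := by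
  classical
  set θ : (Fin d → ℤ) → ℝ := fun x => ∑ t, k t * (x t : ℝ) with hθdef
  set a : (Fin d → ℤ) → ℂ := fun x =>
    (f x : ℂ) * (Complex.I * (x s : ℂ)) * Complex.exp (Complex.I * ((θ x : ℝ) : ℂ)) with ha
  -- the sign flip in coordinate s
  set δ : Fin d → ℤ := fun j => if j = s then -1 else 1 with hδ
  have hδval : ∀ j, δ j = 1 ∨ δ j = -1 := by
    intro j; by_cases h : j = s <;> simp [hδ, h]
  set σfun : (Fin d → ℤ) → (Fin d → ℤ) := fun x j => δ j * x j with hσfun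
  have hσinv : Function.Involutive σfun := by
    intro x; funext j; by_cases h : j = s <;> simp [hσfun, hδ, h]
  set σ : Equiv.Perm (Fin d → ℤ) := hσinv.toPerm with hσ
  have hfσ : ∀ x, f (σfun x) = f x := by
    intro x
    exact (hfs 1 δ hδval x).symm
  have hσs : ∀ x : Fin d → ℤ, (σfun x) s = -(x s) := by
    intro x; simp [hσfun, hδ]
  have hθσ : ∀ x : Fin d → ℤ, θ (σfun x) = θ x - 2 * (k s * (x s : ℝ)) := by
    intro x
    have h1 : θ (σfun x) = ∑ t, k t * ((σfun x) t : ℝ) := rfl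
    have h1' : θ x = ∑ t, k t * ((x t : ℤ) : ℝ) := rfl
    rw [h1, h1']
    rw [← Finset.add_sum_erase _ (fun t => k t * (((σfun x) t : ℤ) : ℝ)) (Finset.mem_univ s),
        ← Finset.add_sum_erase _ (fun t => k t * ((x t : ℤ) : ℝ)) (Finset.mem_univ s)]
    have h2 : ∑ t ∈ Finset.univ.erase s, k t * (((σfun x) t : ℤ) : ℝ)
        = ∑ t ∈ Finset.univ.erase s, k t * ((x t : ℤ) : ℝ) := by
      refine Finset.sum_congr rfl fun t ht => ?_
      have : (σfun x) t = x t := by simp [hσfun, hδ, (Finset.mem_erase.mp ht).1]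
      rw [this]
    rw [h2, hσs x]
    push_cast
    ring
  -- summability of a and of its norms
  have hanorm : ∀ x, ‖a x‖ = |f x| * |(x s : ℝ)| := by
    intro x
    have habs : ‖(Complex.exp (Complex.I * ((θ x : ℝ) : ℂ)))‖ = 1 := by
      rw [mul_comm]
      exact Complex.norm_exp_ofReal_mul_I _
    simp only [ha, norm_mul, Complex.norm_real, Real.norm_eq_abs,
      Complex.norm_I, Complex.norm_intCast, habs]
    ring
  have hnormsum : Summable fun x => ‖a x‖ := by
    refine Summable.of_nonneg_of_le (fun x => norm_nonneg _) (fun x => ?_) (hf.add hf2)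
    rw [hanorm x]
    calc |f x| * |(x s : ℝ)| ≤ |f x| * (1 + ((x s : ℝ)) ^ 2) := by
          gcongr; exact abs_le_one_add_sq' _
      _ ≤ |f x| * (1 + ∑ t, ((x t : ℝ)) ^ 2) := by
          gcongr
          exact Finset.single_le_sum (f := fun t => ((x t : ℝ)) ^ 2)
            (fun t _ => sq_nonneg _) (Finset.mem_univ s)
      _ = |f x| + |f x| * ∑ t, ((x t : ℝ)) ^ 2 := by ring
  have hasum : Summable a := Summable.of_norm hnormsum
  have haσsum : Summable (fun x => a (σfun x)) := by
    have := (Equiv.summable_iff σ).mpr hasum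
    exact this
  -- the doubled sum
  have hdouble : 2 * (∑' x, a x) = ∑' x, (a x + a (σfun x)) := by
    rw [Summable.tsum_add hasum haσsum]
    have : ∑' x, a (σfun x) = ∑' x, a x := by
      have := Equiv.tsum_eq σ a
      exact this
    rw [this]
    ring
  -- pointwise identity
  have hpoint : ∀ x : Fin d → ℤ, a x + a (σfun x) =
      (f x : ℂ) * (Complex.I * (x s : ℂ)) *
        Complex.exp (Complex.I * ((θ x - k s * (x s : ℝ) : ℝ) : ℂ)) *
        (2 * Complex.sin ((k s * (x s : ℝ) : ℝ) : ℂ) * Complex.I) := by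
    intro x
    have haσx : a (σfun x) = (f x : ℂ) * (Complex.I * (-(x s : ℂ))) *
        Complex.exp (Complex.I * ((θ x - 2 * (k s * (x s : ℝ)) : ℝ) : ℂ)) := by
      simp only [ha, hfσ, hθσ, hσs]
      push_cast
      ring
    rw [haσx]
    have e1 : Complex.exp (Complex.I * ((θ x : ℝ) : ℂ)) =
        Complex.exp (Complex.I * ((θ x - k s * (x s : ℝ) : ℝ) : ℂ)) *
          Complex.exp (((k s * (x s : ℝ) : ℝ) : ℂ) * Complex.I) := by
      rw [← Complex.exp_add]; congr 1; push_cast; ring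
    have e2 : Complex.exp (Complex.I * ((θ x - 2 * (k s * (x s : ℝ)) : ℝ) : ℂ)) =
        Complex.exp (Complex.I * ((θ x - k s * (x s : ℝ) : ℝ) : ℂ)) *
          Complex.exp (-(((k s * (x s : ℝ) : ℝ) : ℂ) * Complex.I)) := by
      rw [← Complex.exp_add]; congr 1; push_cast; ring
    have esin : Complex.exp (((k s * (x s : ℝ) : ℝ) : ℂ) * Complex.I) -
        Complex.exp (-(((k s * (x s : ℝ) : ℝ) : ℂ) * Complex.I)) =
        2 * Complex.sin ((k s * (x s : ℝ) : ℝ) : ℂ) * Complex.I := by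
      rw [Complex.sin, neg_mul]
      have hI : Complex.I ^ 2 = -1 := Complex.I_sq
      linear_combination (Complex.exp (((k s * (x s : ℝ) : ℝ) : ℂ) * Complex.I) -
        Complex.exp (-(((k s * (x s : ℝ) : ℝ) : ℂ) * Complex.I))) * hI
    rw [ha]
    simp only
    rw [e1, e2]
    linear_combination ((f x : ℂ) * (Complex.I * (x s : ℂ)) *
      Complex.exp (Complex.I * ((θ x - k s * (x s : ℝ) : ℝ) : ℂ))) * esin
  -- norm bound on each combined term
  have hcomb_bound : ∀ x : Fin d → ℤ, ‖a x + a (σfun x)‖ ≤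
      2 * (|Real.sin (k s)| * (|f x| * ((x s : ℝ)) ^ 2)) := by
    intro x
    rw [hpoint x]
    have habs : ‖(Complex.exp (Complex.I *
        ((θ x - k s * (x s : ℝ) : ℝ) : ℂ)))‖ = 1 := by
      rw [mul_comm]; exact Complex.norm_exp_ofReal_mul_I _
    have hsinabs : ‖(Complex.sin ((k s * (x s : ℝ) : ℝ) : ℂ))‖ =
        |Real.sin (k s * (x s : ℝ))| := by
      rw [← Complex.ofReal_sin, Complex.norm_real, Real.norm_eq_abs]
    have hnorm : ‖(f x : ℂ) * (Complex.I * (x s : ℂ)) *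
        Complex.exp (Complex.I * ((θ x - k s * (x s : ℝ) : ℝ) : ℂ)) *
        (2 * Complex.sin ((k s * (x s : ℝ) : ℝ) : ℂ) * Complex.I)‖
        = |f x| * |(x s : ℝ)| * (2 * |Real.sin (k s * (x s : ℝ))|) := by
      simp only [norm_mul, Complex.norm_real, Real.norm_eq_abs,
        Complex.norm_I, Complex.norm_intCast, habs, hsinabs, Complex.norm_two]
      ring
    rw [hnorm]
    have hsinle : |Real.sin (k s * (x s : ℝ))| ≤ |(x s : ℝ)| * |Real.sin (k s)| := by
      rw [mul_comm (k s)]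
      exact abs_sin_int_mul_le (x s) (k s)
    calc |f x| * |(x s : ℝ)| * (2 * |Real.sin (k s * (x s : ℝ))|)
        ≤ |f x| * |(x s : ℝ)| * (2 * (|(x s : ℝ)| * |Real.sin (k s)|)) := by
          gcongr
      _ = 2 * (|Real.sin (k s)| * (|f x| * (|(x s : ℝ)|) ^ 2)) := by ring
      _ = 2 * (|Real.sin (k s)| * (|f x| * ((x s : ℝ)) ^ 2)) := by rw [_root_.sq_abs]
  -- conclude
  have hcombsum : Summable fun x => ‖a x + a (σfun x)‖ :=
    (hnormsum.add (hnormsum.comp_injective σ.injective)).of_nonneg_of_le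
      (fun x => norm_nonneg _) (fun x => (norm_add_le _ _))
  have hRHSsum : Summable fun x : Fin d → ℤ =>
      2 * (|Real.sin (k s)| * (|f x| * ((x s : ℝ)) ^ 2)) :=
    ((summable_absmul d f s hf2).mul_left _).mul_left 2
  have step1 : ‖(2 * ∑' x, a x)‖ ≤
      ∑' x, 2 * (|Real.sin (k s)| * (|f x| * ((x s : ℝ)) ^ 2)) := by
    rw [hdouble]
    calc ‖(∑' x, (a x + a (σfun x)))‖ ≤ ∑' x, ‖a x + a (σfun x)‖ :=
          norm_tsum_le_tsum_norm hcombsum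
      _ ≤ ∑' x, 2 * (|Real.sin (k s)| * (|f x| * ((x s : ℝ)) ^ 2)) :=
          Summable.tsum_le_tsum hcomb_bound hcombsum hRHSsum
  have step2 : ‖(2 * ∑' x, a x)‖ = 2 * ‖(∑' x, a x)‖ := by
    rw [norm_mul, Complex.norm_two]
  rw [step2] at step1
  have step3 : ∑' x, 2 * (|Real.sin (k s)| * (|f x| * ((x s : ℝ)) ^ 2)) =
      2 * (|Real.sin (k s)| * ∑' x, |f x| * ((x s : ℝ)) ^ 2) := by
    rw [tsum_mul_left, tsum_mul_left]
  rw [step3] at step1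
  linarith

lemma moment_eq (d : ℕ) (hd : 0 < d) (f : (Fin d → ℤ) → ℝ) (hfs : TotRotSymm d f)
    (hf2 : Summable fun x : Fin d → ℤ => |f x| * ∑ t, ((x t : ℝ)) ^ 2) (s : Fin d) :
    ∑' x : Fin d → ℤ, |f x| * ((x s : ℝ)) ^ 2 =
      (1 / (d : ℝ)) * ∑' x : Fin d → ℤ, (∑ t, ((x t : ℝ)) ^ 2) * |f x| := by
  classical
  have hmom : ∀ t : Fin d, (∑' x : Fin d → ℤ, |f x| * ((x t : ℝ)) ^ 2)
      = ∑' x : Fin d → ℤ, |f x| * ((x s : ℝ)) ^ 2 := by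
    intro t
    set ν := Equiv.swap s t with hν
    set e : (Fin d → ℤ) ≃ (Fin d → ℤ) :=
      { toFun := fun x => x ∘ ν
        invFun := fun x => x ∘ ν
        left_inv := fun x => by funext j; simp [hν, Function.comp]
        right_inv := fun x => by funext j; simp [hν, Function.comp] } with he
    have hfe : ∀ x, f (e x) = f x := by
      intro x
      have := hfs ν (fun _ => 1) (fun j => Or.inl rfl) x
      simp only [one_mul] at this
      exact this.symm
    have := (Equiv.tsum_eq e (fun x => |f x| * ((x t : ℝ)) ^ 2))
    rw [← this]
    refine tsum_congr fun x => ?_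
    rw [hfe]
    have : (e x) t = x s := by simp [he, hν, Function.comp]
    rw [this]
  have htot : ∑' x : Fin d → ℤ, (∑ t, ((x t : ℝ)) ^ 2) * |f x|
      = (d : ℝ) * ∑' x : Fin d → ℤ, |f x| * ((x s : ℝ)) ^ 2 := by
    have h1 : ∀ x : Fin d → ℤ, (∑ t, ((x t : ℝ)) ^ 2) * |f x|
        = ∑ t, |f x| * ((x t : ℝ)) ^ 2 := by
      intro x; rw [Finset.sum_mul]; exact Finset.sum_congr rfl fun t _ => by ring
    calc ∑' x : Fin d → ℤ, (∑ t, ((x t : ℝ)) ^ 2) * |f x|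
        = ∑' x : Fin d → ℤ, ∑ t, |f x| * ((x t : ℝ)) ^ 2 := tsum_congr h1
      _ = ∑ t, ∑' x : Fin d → ℤ, |f x| * ((x t : ℝ)) ^ 2 :=
          Summable.tsum_finsetSum fun t _ => summable_absmul d f t hf2
      _ = ∑ t : Fin d, ∑' x : Fin d → ℤ, |f x| * ((x s : ℝ)) ^ 2 :=
          Finset.sum_congr rfl fun t _ => hmom t
      _ = (d : ℝ) * ∑' x : Fin d → ℤ, |f x| * ((x s : ℝ)) ^ 2 := by
          rw [Finset.sum_const, Finset.card_univ, Fintype.card_fin, nsmul_eq_mul]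
  rw [htot]
  have hd' : (d : ℝ) ≠ 0 := Nat.cast_ne_zero.mpr hd.ne'
  field_simp

/-- For absolutely summable, totally rotationally symmetric `f, g : ℤ^d → ℝ`
with finite second moments,
`∑ₛ |∂ₛ f̂(k) ∂ₛ ĝ(k)| ≤ D̂^sin(k) (∑ₓ ‖x‖₂²|f(x)|)(∑_y ‖y‖₂²|g(y)|)`,
where `D̂^sin(k) = (1/d²) ∑ₛ sin²(kₛ)`. -/
theorem fourier_mixed_deriv_bound (d : ℕ) (hd : 0 < d) (f g : (Fin d → ℤ) → ℝ)
    (hf : Summable fun x => |f x|) (hg : Summable fun x => |g x|)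
    (hfs : TotRotSymm d f) (hgs : TotRotSymm d g)
    (hf2 : Summable fun x : Fin d → ℤ => |f x| * ∑ t, ((x t : ℝ)) ^ 2)
    (hg2 : Summable fun x : Fin d → ℤ => |g x| * ∑ t, ((x t : ℝ)) ^ 2)
    (k : Fin d → ℝ) (hk : ∀ t, k t ∈ Set.Ioo (-Real.pi) Real.pi) :
    (∑ s : Fin d,
        ‖(deriv (fun u => fourierHat d f (Function.update k s u)) (k s) *
            deriv (fun u => fourierHat d g (Function.update k s u)) (k s))‖) ≤
      ((1 / (d : ℝ) ^ 2) * ∑ s, (Real.sin (k s)) ^ 2) *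
        ((∑' x : Fin d → ℤ, (∑ t, ((x t : ℝ)) ^ 2) * |f x|) *
          ∑' y : Fin d → ℤ, (∑ t, ((y t : ℝ)) ^ 2) * |g y|) := by
  set Sf := ∑' x : Fin d → ℤ, (∑ t, ((x t : ℝ)) ^ 2) * |f x| with hSf
  set Sg := ∑' y : Fin d → ℤ, (∑ t, ((y t : ℝ)) ^ 2) * |g y| with hSg
  have hSfnn : 0 ≤ Sf := tsum_nonneg fun x => by positivity
  have hSgnn : 0 ≤ Sg := tsum_nonneg fun x => by positivity
  have hbound : ∀ s : Fin d,
      ‖(deriv (fun u => fourierHat d f (Function.update k s u)) (k s) *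
            deriv (fun u => fourierHat d g (Function.update k s u)) (k s))‖
        ≤ (Real.sin (k s)) ^ 2 * ((1 / (d : ℝ)) * Sf * ((1 / (d : ℝ)) * Sg)) := by
    intro s
    rw [(hasDerivAt_fourierHat d f hf hf2 k s).deriv,
        (hasDerivAt_fourierHat d g hg hg2 k s).deriv, norm_mul]
    have h1 := deriv_term_bound d f hf hfs hf2 k s
    have h2 := deriv_term_bound d g hg hgs hg2 k s
    rw [moment_eq d hd f hfs hf2 s] at h1
    rw [moment_eq d hd g hgs hg2 s] at h2
    rw [← hSf] at h1
    rw [← hSg] at h2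
    calc ‖(∑' x : Fin d → ℤ, (f x : ℂ) * (Complex.I * (x s : ℂ)) *
            Complex.exp (Complex.I * ((∑ t, k t * (x t : ℝ) : ℝ) : ℂ)))‖ *
          ‖(∑' x : Fin d → ℤ, (g x : ℂ) * (Complex.I * (x s : ℂ)) *
            Complex.exp (Complex.I * ((∑ t, k t * (x t : ℝ) : ℝ) : ℂ)))‖
        ≤ (|Real.sin (k s)| * ((1 / (d : ℝ)) * Sf)) *
            (|Real.sin (k s)| * ((1 / (d : ℝ)) * Sg)) := by
          exact mul_le_mul h1 h2 (norm_nonneg _)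
            (mul_nonneg (abs_nonneg _) (mul_nonneg (by positivity) hSfnn))
      _ = (Real.sin (k s)) ^ 2 * ((1 / (d : ℝ)) * Sf * ((1 / (d : ℝ)) * Sg)) := by
          rw [mul_mul_mul_comm, ← pow_two, _root_.sq_abs]
  calc (∑ s : Fin d,
        ‖(deriv (fun u => fourierHat d f (Function.update k s u)) (k s) *
            deriv (fun u => fourierHat d g (Function.update k s u)) (k s))‖)
      ≤ ∑ s : Fin d, (Real.sin (k s)) ^ 2 * ((1 / (d : ℝ)) * Sf * ((1 / (d : ℝ)) * Sg)) :=
        Finset.sum_le_sum fun s _ => hbound s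
    _ = ((1 / (d : ℝ) ^ 2) * ∑ s, (Real.sin (k s)) ^ 2) * (Sf * Sg) := by
        rw [← Finset.sum_mul]
        ring
end

section
/- With D_k and J as above and 1 the all-ones vector in C^{2d}, for z ∈ C with z² ≠ 1 one has z · 1^T (D_k + zJ)^{-1} 1 = 2dz(D̂(k) − z)/(1 − z²), where D̂(k) = (1/d)Σ_{s=1}^d cos(k_s). Consequently the non-backtracking walk Green's function satisfies B̂_z(k) = 1/(1 − z·1^T(D_k + zJ)^{-1}1) = (1 − z²)/(1 + (2d−1)z² − 2dz·D̂(k)). -/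
/-- The `2d × 2d` diagonal matrix `D_k` with entries `e^{i k_ι}` for
`ι ∈ {±1,…,±d}`, where `k_{-j} = -k_j`. We index `{±1,…,±d}` by
`Fin d ⊕ Fin d`, with `inl j ↦ +j` and `inr j ↦ -j`. -/
noncomputable def Dmat (d : ℕ) (k : Fin d → ℝ) :
    Matrix (Fin d ⊕ Fin d) (Fin d ⊕ Fin d) ℂ :=
  Matrix.diagonal fun ι =>
    Complex.exp (Complex.I * (Sum.elim (fun j => (k j : ℂ)) (fun j => -(k j : ℂ)) ι))

/-- The matrix `J` with entries `J_{ι,κ} = δ_{ι,-κ}`. -/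
def Jmat (d : ℕ) : Matrix (Fin d ⊕ Fin d) (Fin d ⊕ Fin d) ℂ :=
  Matrix.of fun ι κ => if ι = κ.swap then 1 else 0

/-- `z · 1ᵀ (D_k + zJ)⁻¹ 1 = 2dz(D̂(k) - z)/(1 - z²)`, and hence the NBW
Green's function satisfies
`B̂_z(k) = 1/(1 - z·1ᵀ(D_k+zJ)⁻¹1) = (1-z²)/(1+(2d-1)z² - 2dz D̂(k))`. -/
theorem nbw_quadratic_form (d : ℕ) (hd : 0 < d) (k : Fin d → ℝ) (z : ℂ)
    (hz : z ^ 2 ≠ 1) :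
    (z * ∑ ι, ∑ κ, ((Dmat d k + z • Jmat d)⁻¹) ι κ =
        2 * (d : ℂ) * z *
          ((((1 / (d : ℝ)) * ∑ s, Real.cos (k s) : ℝ) : ℂ) - z) / (1 - z ^ 2)) ∧
    (1 / (1 - z * ∑ ι, ∑ κ, ((Dmat d k + z • Jmat d)⁻¹) ι κ) =
        (1 - z ^ 2) /
          (1 + (2 * (d : ℂ) - 1) * z ^ 2 -
            2 * (d : ℂ) * z * (((1 / (d : ℝ)) * ∑ s, Real.cos (k s) : ℝ) : ℂ))) := by
  have hz' : (1 : ℂ) - z ^ 2 ≠ 0 := by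
    intro h; apply hz; linear_combination -h
  have hd' : (d : ℂ) ≠ 0 := Nat.cast_ne_zero.mpr hd.ne'
  set θ : Fin d ⊕ Fin d → ℂ := Sum.elim (fun j => (k j : ℂ)) (fun j => -(k j : ℂ)) with hθ
  set N : Matrix (Fin d ⊕ Fin d) (Fin d ⊕ Fin d) ℂ :=
    Matrix.of fun ι κ =>
      ((if κ = ι then Complex.exp (-(Complex.I * θ ι)) else 0)
        - (if κ = ι.swap then z else 0)) / (1 - z ^ 2) with hN
  have hswap : ∀ ι : Fin d ⊕ Fin d, θ ι.swap = -θ ι := by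
    rintro (j | j) <;> simp [hθ]
  have hne : ∀ ι : Fin d ⊕ Fin d, ι.swap ≠ ι := by
    rintro (j | j) <;> simp
  have hee : ∀ ι, Complex.exp (Complex.I * θ ι) * Complex.exp (-(Complex.I * θ ι)) = 1 := by
    intro ι; rw [← Complex.exp_add]; simp
  -- the key product computation
  have key : ∀ ι τ, (∑ κ, (Dmat d k + z • Jmat d) ι κ * N κ τ)
      = Complex.exp (Complex.I * θ ι) * N ι τ + z * N ι.swap τ := by
    intro ι τ
    have step : ∀ κ, (Dmat d k + z • Jmat d) ι κ * N κ τ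
        = (if κ = ι then Complex.exp (Complex.I * θ ι) * N ι τ else 0)
          + (if κ = ι.swap then z * N ι.swap τ else 0) := by
      intro κ
      simp only [Matrix.add_apply, Dmat, Matrix.diagonal_apply, Matrix.smul_apply, Jmat,
        Matrix.of_apply, smul_eq_mul, ← hθ]
      by_cases h1 : κ = ι
      · subst h1
        have h2 : ¬ (κ = κ.swap) := fun h => hne κ h.symm
        simp [h2, Ne.symm (hne κ)]
      · by_cases h2 : κ = ι.swap
        · subst h2
          have h3 : ι = ι.swap.swap := by simp
          simp [Ne.symm h1, hne ι, ← h3]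
        · have h2' : ¬ (ι = κ.swap) := by
            intro h; exact h2 (by rw [h]; simp)
          simp [Ne.symm h1, h2', h1, h2]
    rw [Finset.sum_congr rfl fun κ _ => step κ, Finset.sum_add_distrib,
      Finset.sum_ite_eq' _ ι, Finset.sum_ite_eq' _ (Sum.swap ι)]
    simp
  have hmul : (Dmat d k + z • Jmat d) * N = 1 := by
    ext ι τ
    rw [Matrix.mul_apply, key ι τ]
    have hswap2 : Complex.exp (-(Complex.I * θ ι.swap)) = Complex.exp (Complex.I * θ ι) := by
      rw [hswap]; ring_nf
    simp only [hN, Matrix.of_apply, hswap2, Sum.swap_swap, Matrix.one_apply]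
    by_cases h1 : τ = ι
    · subst h1
      rw [if_pos rfl, if_pos rfl, if_neg (fun h => hne τ h.symm), if_neg (Ne.symm (hne τ))]
      field_simp
      simp only [↓reduceIte]
      linear_combination hee τ
    · by_cases h2 : τ = ι.swap
      · subst h2
        rw [if_pos rfl, if_pos rfl, if_neg h1, if_neg (hne ι), if_neg (Ne.symm (hne ι))]
        field_simp
        ring
      · rw [if_neg h1, if_neg h2, if_neg h1, if_neg h2, if_neg (Ne.symm h1)]
        simp
  have hinv : (Dmat d k + z • Jmat d)⁻¹ = N := Matrix.inv_eq_right_inv hmul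
  -- compute the double sum
  have hsum : (∑ ι, ∑ κ, N ι κ)
      = ((2 : ℂ) * ∑ s, (Real.cos (k s) : ℂ) - 2 * d * z) / (1 - z ^ 2) := by
    have inner : ∀ ι, (∑ κ, N ι κ)
        = (Complex.exp (-(Complex.I * θ ι)) - z) / (1 - z ^ 2) := by
      intro ι
      simp only [hN, Matrix.of_apply, ← Finset.sum_div, Finset.sum_sub_distrib,
        Finset.sum_ite_eq' Finset.univ ι, Finset.sum_ite_eq' Finset.univ (Sum.swap ι),
        Finset.mem_univ, if_true]
    rw [Finset.sum_congr rfl fun ι _ => inner ι, ← Finset.sum_div, Finset.sum_sub_distrib,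
      Finset.sum_const, Finset.card_univ]
    congr 1
    have hexp : (∑ ι : Fin d ⊕ Fin d, Complex.exp (-(Complex.I * θ ι)))
        = 2 * ∑ s, (Real.cos (k s) : ℂ) := by
      rw [Fintype.sum_sum_type]
      simp only [hθ, Sum.elim_inl, Sum.elim_inr]
      rw [← Finset.sum_add_distrib, Finset.mul_sum]
      refine Finset.sum_congr rfl fun j _ => ?_
      rw [Complex.ofReal_cos,
        show -(Complex.I * ((k j : ℝ) : ℂ)) = -((k j : ℝ) : ℂ) * Complex.I from by ring,
        show -(Complex.I * -((k j : ℝ) : ℂ)) = ((k j : ℝ) : ℂ) * Complex.I from by ring]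
      linear_combination -Complex.two_cos ((k j : ℝ) : ℂ)
    rw [hexp, Fintype.card_sum, Fintype.card_fin]
    rw [nsmul_eq_mul]
    push_cast
    ring
  have hC : ((((1 / (d : ℝ)) * ∑ s, Real.cos (k s) : ℝ) : ℂ))
      = (1 / (d : ℂ)) * ∑ s, (Real.cos (k s) : ℂ) := by push_cast; ring
  have part1 : z * ∑ ι, ∑ κ, ((Dmat d k + z • Jmat d)⁻¹) ι κ =
      2 * (d : ℂ) * z *
        ((((1 / (d : ℝ)) * ∑ s, Real.cos (k s) : ℝ) : ℂ) - z) / (1 - z ^ 2) := by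
    rw [hinv, hsum, hC]
    field_simp
  refine ⟨part1, ?_⟩
  rw [part1, hC]
  set C := ∑ s, (Real.cos (k s) : ℂ) with hCdef
  have : (1 : ℂ) - 2 * (d : ℂ) * z * (1 / (d : ℂ) * C - z) / (1 - z ^ 2)
      = (1 + (2 * (d : ℂ) - 1) * z ^ 2 - 2 * (d : ℂ) * z * (1 / (d : ℂ) * C)) / (1 - z ^ 2) := by
    field_simp
    ring
  rw [this, one_div, inv_div]
end
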